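/- In a reaction-function game, if there exists a safe reaction-function equilibrium, then there exists a Pareto-efficient safe reaction-function equilibrium: whenever a safe reaction-function equilibrium R supports outcome â and a* Pareto-dominates â (u_i(a*) ≥ u_i(â) for all i), the profile R* obtained from R by redefining R*_i(a*_{-i}) = a*_i for each i is again a safe reaction-function equilibrium supporting a*. -/

import Mathlib

/-!
A profile `R*` obtained from `R` by redirecting every reaction at `a*_{-i}` to `a*_i` can only
gain the single fixed point `a*`: a fixed point of `R*` (or of a unilateral deviation from it)
that agrees with `a*` off some coordinate `j` must, by the redefinition, agree with it at `j`
too. Hence every payoff reachable under `R*`, or under a deviation from `R*`, is either `u(a*)`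
or was already reachable under `R`, where it is bounded by `u(â) ≤ u(a*)`. Safety survives
because at the redirected points the payoff is `u_i(a*) ≥ u_i(â) ≥ maxmin_i`, the last
inequality being safety of `R` at its own fixed point `â`.
-/

/-- A reaction function for player `i` must not depend on `i`'s own coordinate:
it is a function of the actions `a_{-i}` of the other players. -/
def IndepOf {ι : Type*} {A : ι → Type*} (i : ι) (f : (∀ j, A j) → A i) : Prop :=
  ∀ a b : ∀ j, A j, (∀ j, j ≠ i → a j = b j) → f a = f b

/-- The set of fixed points (executable outcomes) of a profile of reaction functions. -/
def FixedPts {ι : Type*} {A : ι → Type*} (R : ∀ i, (∀ j, A j) → A i) : Set (∀ j, A j) :=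
  {a | ∀ i, R i a = a i}

/-- Extended payoff of a reaction-function profile: the supremum (= maximum, in a
finite game) of `u i` over the fixed points, and `⊥ = -∞` when there is none. -/
noncomputable def Upay {ι : Type*} {A : ι → Type*}
    (u : ∀ i : ι, (∀ j, A j) → ℝ) (R : ∀ i, (∀ j, A j) → A i) (i : ι) : EReal :=
  sSup ((fun a => ((u i a : ℝ) : EReal)) '' FixedPts R)

/-- A profile is unambiguous if some fixed point weakly Pareto-dominates all fixed points. -/
def Unambiguous {ι : Type*} {A : ι → Type*}
    (u : ∀ i : ι, (∀ j, A j) → ℝ) (R : ∀ i, (∀ j, A j) → A i) : Prop :=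
  ∃ a ∈ FixedPts R, ∀ a' ∈ FixedPts R, ∀ i, u i a' ≤ u i a

/-- Reaction-function equilibrium: an unambiguous profile with no profitable
unilateral deviation through any reaction function. -/
def IsRFE {ι : Type*} [DecidableEq ι] {A : ι → Type*}
    (u : ∀ i : ι, (∀ j, A j) → ℝ) (R : ∀ i, (∀ j, A j) → A i) : Prop :=
  Unambiguous u R ∧
    ∀ (i : ι) (R' : (∀ j, A j) → A i), IndepOf i R' →
      Upay u (Function.update R i R') i ≤ Upay u R i

/-- Outcome `a` is supported in reaction-function equilibrium. -/
def SupportedOutcome {ι : Type*} [DecidableEq ι] {A : ι → Type*}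
    (u : ∀ i : ι, (∀ j, A j) → ℝ) (a : ∀ j, A j) : Prop :=
  ∃ R : ∀ i, (∀ j, A j) → A i, (∀ i, IndepOf i (R i)) ∧ IsRFE u R ∧
    a ∈ FixedPts R ∧ ∀ a' ∈ FixedPts R, ∀ i, u i a' ≤ u i a

/-- Player `i`'s maxmin payoff. -/
noncomputable def maxmin {ι : Type*} [DecidableEq ι] {A : ι → Type*}
    [∀ j, Fintype (A j)] [∀ j, Nonempty (A j)]
    (u : ∀ i : ι, (∀ j, A j) → ℝ) (i : ι) : ℝ :=
  ⨆ x : A i, ⨅ a : ∀ j, A j, u i (Function.update a i x)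

/-- A reaction function is safe if it guarantees at least the maxmin payoff. -/
def SafeRF {ι : Type*} [DecidableEq ι] {A : ι → Type*}
    [∀ j, Fintype (A j)] [∀ j, Nonempty (A j)]
    (u : ∀ i : ι, (∀ j, A j) → ℝ) (i : ι) (r : (∀ j, A j) → A i) : Prop :=
  ∀ a : ∀ j, A j, maxmin u i ≤ u i (Function.update a i (r a))

open Function

section

variable {ι : Type*} {A : ι → Type*}

theorem coe_le_upay (u : ∀ i : ι, (∀ j, A j) → ℝ) {S : ∀ i, (∀ j, A j) → A i} {a : ∀ j, A j}
    (ha : a ∈ FixedPts S) (i : ι) : ((u i a : ℝ) : EReal) ≤ Upay u S i :=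
  le_sSup (Set.mem_image_of_mem _ ha)

theorem upay_le_coe {u : ∀ i : ι, (∀ j, A j) → ℝ} {S : ∀ i, (∀ j, A j) → A i} {i : ι} {c : ℝ}
    (h : ∀ a ∈ FixedPts S, u i a ≤ c) : Upay u S i ≤ c := by
  refine sSup_le ?_
  rintro _ ⟨a, ha, rfl⟩
  exact EReal.coe_le_coe_iff.mpr (h a ha)

theorem SafeRF.maxmin_le_of_mem_fixedPts [DecidableEq ι] [∀ j, Fintype (A j)]
    [∀ j, Nonempty (A j)] {u : ∀ i : ι, (∀ j, A j) → ℝ} {R : ∀ i, (∀ j, A j) → A i} {i : ι}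
    (hsafe : SafeRF u i (R i)) {a : ∀ j, A j} (ha : a ∈ FixedPts R) : maxmin u i ≤ u i a := by
  simpa only [ha i, update_eq_self] using hsafe a

theorem eq_of_forall_ne_eq_of_apply_eq {a b : ∀ j, A j} {i : ι}
    (hne : ∀ j, j ≠ i → a j = b j) (hi : a i = b i) : a = b := by
  funext j
  by_cases hj : j = i
  · exact hj ▸ hi
  · exact hne j hj

/-- `S` is `R` with each player's reaction at `astar_{-i}` redirected to `astar i`. -/
def RedefinedAt (R : ∀ i, (∀ j, A j) → A i) (astar : ∀ j, A j)
    (S : ∀ i, (∀ j, A j) → A i) : Prop :=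
  ∀ (i : ι) (a : ∀ j, A j),
    ((∀ j, j ≠ i → a j = astar j) → S i a = astar i) ∧
      (¬ (∀ j, j ≠ i → a j = astar j) → S i a = R i a)

namespace RedefinedAt

variable {R S : ∀ i, (∀ j, A j) → A i} {astar : ∀ j, A j}

theorem mem_fixedPts (hS : RedefinedAt R astar S) : astar ∈ FixedPts S :=
  fun i => (hS i astar).1 fun _ _ => rfl

theorem apply_eq_of_ne (hS : RedefinedAt R astar S) {j : ι} {a : ∀ j, A j}
    (hfix : S j a = a j) (hne : a ≠ astar) : R j a = a j := by
  by_cases hoff : ∀ k, k ≠ j → a k = astar k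
  · exact absurd (eq_of_forall_ne_eq_of_apply_eq hoff (hfix.symm.trans ((hS j a).1 hoff))) hne
  · rwa [← (hS j a).2 hoff]

theorem mem_fixedPts_of_ne (hS : RedefinedAt R astar S) {a : ∀ j, A j}
    (ha : a ∈ FixedPts S) (hne : a ≠ astar) : a ∈ FixedPts R :=
  fun j => hS.apply_eq_of_ne (ha j) hne

theorem mem_fixedPts_update_of_ne [DecidableEq ι] (hS : RedefinedAt R astar S) {i : ι}
    {R' : (∀ j, A j) → A i} {a : ∀ j, A j} (ha : a ∈ FixedPts (update S i R'))
    (hne : a ≠ astar) : a ∈ FixedPts (update R i R') := by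
  intro j
  by_cases hj : j = i
  · subst hj
    simpa only [update_self] using ha j
  · have hSj := ha j
    rw [update_of_ne hj] at hSj ⊢
    exact hS.apply_eq_of_ne hSj hne

theorem le_of_mem_fixedPts (hS : RedefinedAt R astar S) {u : ∀ i : ι, (∀ j, A j) → ℝ} {i : ι}
    (hR : ∀ a ∈ FixedPts R, u i a ≤ u i astar) {a : ∀ j, A j} (ha : a ∈ FixedPts S) :
    u i a ≤ u i astar := by
  by_cases hne : a = astar
  · rw [hne]
  · exact hR a (hS.mem_fixedPts_of_ne ha hne)

theorem safeRF [DecidableEq ι] [∀ j, Fintype (A j)] [∀ j, Nonempty (A j)]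
    (hS : RedefinedAt R astar S) {u : ∀ i : ι, (∀ j, A j) → ℝ} {i : ι}
    (hsafe : SafeRF u i (R i)) (hstar : maxmin u i ≤ u i astar) : SafeRF u i (S i) := by
  intro a
  by_cases hoff : ∀ j, j ≠ i → a j = astar j
  · have hupd : update a i (astar i) = astar := update_eq_iff.mpr ⟨rfl, hoff⟩
    rwa [(hS i a).1 hoff, hupd]
  · rw [(hS i a).2 hoff]
    exact hsafe a

theorem upay_update_le [DecidableEq ι] (hS : RedefinedAt R astar S)
    {u : ∀ i : ι, (∀ j, A j) → ℝ} {i : ι} {R' : (∀ j, A j) → A i}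
    (hdev : Upay u (update R i R') i ≤ Upay u R i) (hR : Upay u R i ≤ u i astar) :
    Upay u (update S i R') i ≤ u i astar := by
  refine upay_le_coe fun a ha => ?_
  by_cases hne : a = astar
  · rw [hne]
  · exact EReal.coe_le_coe_iff.mp <|
      (coe_le_upay u (hS.mem_fixedPts_update_of_ne ha hne) i).trans (hdev.trans hR)

end RedefinedAt

end

theorem stmt9_general {ι : Type*} [DecidableEq ι] {A : ι → Type*}
    [∀ j, Fintype (A j)] [∀ j, Nonempty (A j)]
    (u : ∀ i : ι, (∀ j, A j) → ℝ)
    (R : ∀ i, (∀ j, A j) → A i)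
    (hsafe : ∀ i, SafeRF u i (R i)) (hrfe : IsRFE u R)
    (ahat : ∀ j, A j) (hhat : ahat ∈ FixedPts R)
    (hsupp : ∀ a' ∈ FixedPts R, ∀ i, u i a' ≤ u i ahat)
    (astar : ∀ j, A j) (hpar : ∀ i, u i ahat ≤ u i astar)
    (Rstar : ∀ i, (∀ j, A j) → A i)
    (hRstar : ∀ (i : ι) (a : ∀ j, A j),
      ((∀ j, j ≠ i → a j = astar j) → Rstar i a = astar i) ∧
      (¬ (∀ j, j ≠ i → a j = astar j) → Rstar i a = R i a)) :
    (∀ i, SafeRF u i (Rstar i)) ∧ IsRFE u Rstar ∧ astar ∈ FixedPts Rstar ∧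
      ∀ a' ∈ FixedPts Rstar, ∀ i, u i a' ≤ u i astar := by
  have hS : RedefinedAt R astar Rstar := hRstar
  have hR_le : ∀ i, ∀ a ∈ FixedPts R, u i a ≤ u i astar :=
    fun i a ha => (hsupp a ha i).trans (hpar i)
  have hfix : astar ∈ FixedPts Rstar := hS.mem_fixedPts
  have hdom : ∀ a ∈ FixedPts Rstar, ∀ i, u i a ≤ u i astar :=
    fun a ha i => hS.le_of_mem_fixedPts (hR_le i) ha
  have hsafe_star : ∀ i, SafeRF u i (Rstar i) := fun i =>
    hS.safeRF (hsafe i) (((hsafe i).maxmin_le_of_mem_fixedPts hhat).trans (hpar i))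
  refine ⟨hsafe_star, ⟨⟨astar, hfix, hdom⟩, fun i R' hR' => ?_⟩, hfix, hdom⟩
  exact (hS.upay_update_le (hrfe.2 i R' hR') (upay_le_coe (hR_le i))).trans
    (coe_le_upay u hfix i)

/-- if a safe reaction-function equilibrium `R` supports `â` and `a*`
Pareto-dominates `â`, then the profile `R*` obtained from `R` by redefining each
player's reaction at `a*_{-i}` to `a*_i` is a safe reaction-function equilibrium
supporting `a*`. -/
theorem stmt9 {ι : Type*} [Fintype ι] [DecidableEq ι] {A : ι → Type*}
    [∀ j, Fintype (A j)] [∀ j, Nonempty (A j)]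
    (u : ∀ i : ι, (∀ j, A j) → ℝ)
    (R : ∀ i, (∀ j, A j) → A i)
    (hind : ∀ i, IndepOf i (R i)) (hsafe : ∀ i, SafeRF u i (R i)) (hrfe : IsRFE u R)
    (ahat : ∀ j, A j) (hhat : ahat ∈ FixedPts R)
    (hsupp : ∀ a' ∈ FixedPts R, ∀ i, u i a' ≤ u i ahat)
    (astar : ∀ j, A j) (hpar : ∀ i, u i ahat ≤ u i astar)
    (Rstar : ∀ i, (∀ j, A j) → A i)
    (hRstar : ∀ (i : ι) (a : ∀ j, A j),
      ((∀ j, j ≠ i → a j = astar j) → Rstar i a = astar i) ∧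
      (¬ (∀ j, j ≠ i → a j = astar j) → Rstar i a = R i a)) :
    (∀ i, SafeRF u i (Rstar i)) ∧ IsRFE u Rstar ∧ astar ∈ FixedPts Rstar ∧
      ∀ a' ∈ FixedPts Rstar, ∀ i, u i a' ≤ u i astar :=
  stmt9_general u R hsafe hrfe ahat hhat hsupp astar hpar Rstar hRstar
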